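/- Lower semicontinuity of Luxemburg norms along varying exponents (Lemma 2.8): Let p and p_h (h ∈ ℕ) all belong to the class 𝒞 with p_h(x) → p(x) as h → ∞ for every x ∈ Ω. Let u ∈ L^{p(x)}(Ω), let u_h ∈ L^{p_h(x)}(Ω) for every h, and suppose u_h → u almost everywhere in Ω. Then ‖u‖_{p(x)} ≤ liminf_{h→∞} ‖u_h‖_{p_h(x)}. -/

import Mathlib

/-!
If `liminf_h ‖u_h‖_{p_h(x)} < γ`, then `ρ_{p_h(x)}(u_h/γ) ≤ 1` for infinitely many `h`, because
`ρ_{p_h(x)}(u_h/γ)` decreases in `γ` as `p_h ≥ 1`. Since `|u_h/γ|^{p_h} → |u/γ|^p` a.e.,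
Fatou's lemma gives `ρ_{p(x)}(u/γ) ≤ liminf_h ρ_{p_h(x)}(u_h/γ) ≤ 1`, that is `‖u‖_{p(x)} ≤ γ`.
-/

open MeasureTheory Filter Topology

/-- The `p(x)`-modular `ρ_{p(x)}(u) = ∫_Ω |u(x)|^{p(x)} dx`, valued in `ℝ≥0∞`. -/
noncomputable def pModular {N : ℕ} (Ω : Set (EuclideanSpace ℝ (Fin N)))
    (p u : EuclideanSpace ℝ (Fin N) → ℝ) : ENNReal :=
  ∫⁻ x in Ω, ENNReal.ofReal (|u x| ^ p x)

/-- The Luxemburg norm `‖u‖_{p(x)} = inf {γ > 0 : ρ_{p(x)}(u/γ) ≤ 1}`. -/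
noncomputable def luxNorm {N : ℕ} (Ω : Set (EuclideanSpace ℝ (Fin N)))
    (p u : EuclideanSpace ℝ (Fin N) → ℝ) : ℝ :=
  sInf {γ : ℝ | 0 < γ ∧ pModular Ω p (fun x => u x / γ) ≤ 1}

/-- The class `𝒞` of admissible exponents: `p` extends continuously to the
closure of `Ω`, satisfies `1 < inf_Ω p ≤ p(x) ≤ sup_Ω p < N`, and is
log-Hölder continuous. -/
def InClassC {N : ℕ} (Ω : Set (EuclideanSpace ℝ (Fin N)))
    (p : EuclideanSpace ℝ (Fin N) → ℝ) : Prop :=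
  ContinuousOn p (closure Ω) ∧
  (∃ pm pM : ℝ, 1 < pm ∧ pM < (N : ℝ) ∧ ∀ x ∈ Ω, pm ≤ p x ∧ p x ≤ pM) ∧
  (∃ L : ℝ, 0 < L ∧ ∀ x ∈ Ω, ∀ y ∈ Ω, 0 < dist x y → dist x y ≤ 1 / 2 →
    |p x - p y| ≤ -L / Real.log (dist x y))

section Luxemburg

variable {N : ℕ} {Ω : Set (EuclideanSpace ℝ (Fin N))}

lemma pModular_div_le_mul (hΩ : MeasurableSet Ω) {q : EuclideanSpace ℝ (Fin N) → ℝ}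
    (hq : ∀ x ∈ Ω, 1 ≤ q x) (v : EuclideanSpace ℝ (Fin N) → ℝ) {γ' γ : ℝ} (hγ' : 0 < γ')
    (hγ : γ' ≤ γ) :
    pModular Ω q (fun x => v x / γ) ≤
      ENNReal.ofReal (γ' / γ) * pModular Ω q (fun x => v x / γ') := by
  have hγ0 : 0 < γ := hγ'.trans_le hγ
  have hratio : 0 < γ' / γ := div_pos hγ' hγ0
  have hratio_le : γ' / γ ≤ 1 := (div_le_one hγ0).2 hγ
  rw [pModular, pModular, ← lintegral_const_mul' _ _ ENNReal.ofReal_ne_top]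
  refine lintegral_mono_ae ?_
  filter_upwards [ae_restrict_mem hΩ] with x hx
  rw [← ENNReal.ofReal_mul hratio.le]
  refine ENNReal.ofReal_le_ofReal ?_
  have hscale : |v x / γ| = γ' / γ * |v x / γ'| := by
    rw [abs_div, abs_div, abs_of_pos hγ0, abs_of_pos hγ']
    field_simp
  calc |v x / γ| ^ q x = (γ' / γ) ^ q x * |v x / γ'| ^ q x := by
        rw [hscale, Real.mul_rpow hratio.le (abs_nonneg _)]
    _ ≤ (γ' / γ) ^ (1 : ℝ) * |v x / γ'| ^ q x := by
        exact mul_le_mul_of_nonneg_right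
          (Real.rpow_le_rpow_of_exponent_ge hratio hratio_le (hq x hx)) (by positivity)
    _ = γ' / γ * |v x / γ'| ^ q x := by rw [Real.rpow_one]

lemma exists_pModular_div_le_one (hΩ : MeasurableSet Ω) {q v : EuclideanSpace ℝ (Fin N) → ℝ}
    (hq : ∀ x ∈ Ω, 1 ≤ q x) (hv : pModular Ω q v < ⊤) :
    ∃ γ : ℝ, 0 < γ ∧ pModular Ω q (fun x => v x / γ) ≤ 1 := by
  set γ : ℝ := max 1 (pModular Ω q v).toReal
  have hγ1 : 1 ≤ γ := le_max_left _ _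
  have hγ0 : 0 < γ := one_pos.trans_le hγ1
  refine ⟨γ, hγ0, ?_⟩
  have hv_le : pModular Ω q v ≤ ENNReal.ofReal γ :=
    (ENNReal.le_ofReal_iff_toReal_le hv.ne hγ0.le).2 (le_max_right _ _)
  calc pModular Ω q (fun x => v x / γ)
      ≤ ENNReal.ofReal (1 / γ) * pModular Ω q (fun x => v x / 1) :=
        pModular_div_le_mul hΩ hq v one_pos hγ1
    _ ≤ (ENNReal.ofReal γ)⁻¹ * ENNReal.ofReal γ := by
        simp only [div_one, one_div, ENNReal.ofReal_inv_of_pos hγ0]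
        gcongr
    _ = 1 := ENNReal.inv_mul_cancel (by simpa using hγ0) ENNReal.ofReal_ne_top

lemma pModular_div_le_one_of_luxNorm_lt (hΩ : MeasurableSet Ω)
    {q v : EuclideanSpace ℝ (Fin N) → ℝ} (hq : ∀ x ∈ Ω, 1 ≤ q x) (hv : pModular Ω q v < ⊤)
    {γ : ℝ} (hγ : luxNorm Ω q v < γ) :
    pModular Ω q (fun x => v x / γ) ≤ 1 := by
  obtain ⟨γ', ⟨hγ'0, hγ'mod⟩, hγ'γ⟩ :=
    exists_lt_of_csInf_lt (exists_pModular_div_le_one hΩ hq hv) hγ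
  calc pModular Ω q (fun x => v x / γ)
      ≤ ENNReal.ofReal (γ' / γ) * pModular Ω q (fun x => v x / γ') :=
        pModular_div_le_mul hΩ hq v hγ'0 hγ'γ.le
    _ ≤ 1 * 1 := by
        gcongr
        exact ENNReal.ofReal_le_one.2 ((div_le_one (hγ'0.trans hγ'γ)).2 hγ'γ.le)
    _ = 1 := one_mul 1

lemma luxNorm_le_of_pModular_div_le_one {q v : EuclideanSpace ℝ (Fin N) → ℝ} {γ : ℝ}
    (hγ : 0 < γ) (hmod : pModular Ω q (fun x => v x / γ) ≤ 1) : luxNorm Ω q v ≤ γ :=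
  csInf_le ⟨0, fun _ hγ' => hγ'.1.le⟩ ⟨hγ, hmod⟩

lemma pModular_le_liminf {q v : EuclideanSpace ℝ (Fin N) → ℝ}
    {qs vs : ℕ → EuclideanSpace ℝ (Fin N) → ℝ} (hq : ∀ᵐ x ∂volume.restrict Ω, 0 < q x)
    (hqs : ∀ n, AEMeasurable (qs n) (volume.restrict Ω))
    (hvs : ∀ n, AEMeasurable (vs n) (volume.restrict Ω))
    (hqs_lim : ∀ᵐ x ∂volume.restrict Ω, Tendsto (fun n => qs n x) atTop (𝓝 (q x)))
    (hvs_lim : ∀ᵐ x ∂volume.restrict Ω, Tendsto (fun n => vs n x) atTop (𝓝 (v x))) :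
    pModular Ω q v ≤ liminf (fun n => pModular Ω (qs n) (vs n)) atTop := by
  have hpow_lim : ∀ᵐ x ∂volume.restrict Ω, ENNReal.ofReal (|v x| ^ q x) =
      liminf (fun n => ENNReal.ofReal (|vs n x| ^ qs n x)) atTop := by
    filter_upwards [hq, hqs_lim, hvs_lim] with x hqx hqx_lim hvx_lim
    refine (Tendsto.liminf_eq ?_).symm
    exact (ENNReal.continuous_ofReal.tendsto _).comp (hvx_lim.abs.rpow hqx_lim (Or.inr hqx))
  calc pModular Ω q v
      = ∫⁻ x in Ω, liminf (fun n => ENNReal.ofReal (|vs n x| ^ qs n x)) atTop :=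
        lintegral_congr_ae hpow_lim
    _ ≤ liminf (fun n => pModular Ω (qs n) (vs n)) atTop :=
        lintegral_liminf_le' fun n => ((hvs n).abs.pow (hqs n)).ennreal_ofReal

end Luxemburg

lemma ENNReal.ofReal_le_liminf_ofReal_of_forall_frequently_lt {ι : Type*} {l : Filter ι}
    {a : ℝ} {b : ι → ℝ} (h : ∀ γ > 0, (∃ᶠ i in l, b i < γ) → a ≤ γ) :
    ENNReal.ofReal a ≤ liminf (fun i => ENNReal.ofReal (b i)) l := by
  refine le_of_forall_gt_imp_ge_of_dense fun c hc => ?_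
  rcases eq_or_ne c ⊤ with rfl | hc_top
  · exact le_top
  have hc_pos : 0 < c.toReal := ENNReal.toReal_pos (pos_of_gt hc).ne' hc_top
  rw [← ENNReal.ofReal_toReal hc_top] at hc ⊢
  refine ENNReal.ofReal_le_ofReal (h _ hc_pos ?_)
  exact (frequently_lt_of_liminf_lt (by isBoundedDefault) hc).mono fun i hi =>
    (ENNReal.ofReal_lt_ofReal_iff hc_pos).1 hi

/-- The `liminf` is taken in `ℝ≥0∞` to allow the value `∞`. -/
theorem luxNorm_lower_semicontinuous_general {N : ℕ}
    (Ω : Set (EuclideanSpace ℝ (Fin N))) (hΩopen : IsOpen Ω)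
    (p : EuclideanSpace ℝ (Fin N) → ℝ)
    (ph : ℕ → EuclideanSpace ℝ (Fin N) → ℝ)
    (hp : InClassC Ω p) (hph : ∀ h, InClassC Ω (ph h))
    (hconv : ∀ x ∈ Ω, Tendsto (fun h => ph h x) atTop (𝓝 (p x)))
    (u : EuclideanSpace ℝ (Fin N) → ℝ)
    (uh : ℕ → EuclideanSpace ℝ (Fin N) → ℝ)
    (huhmeas : ∀ h, Measurable (uh h))
    (huhmem : ∀ h, pModular Ω (ph h) (uh h) < ⊤)
    (hae : ∀ᵐ x ∂(volume.restrict Ω), Tendsto (fun h => uh h x) atTop (𝓝 (u x))) :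
    ENNReal.ofReal (luxNorm Ω p u) ≤
      liminf (fun h => ENNReal.ofReal (luxNorm Ω (ph h) (uh h))) atTop := by
  have hΩ : MeasurableSet Ω := hΩopen.measurableSet
  have hph_one : ∀ h, ∀ x ∈ Ω, 1 ≤ ph h x := fun h x hx => by
    obtain ⟨pm, _, hpm, -, hbounds⟩ := (hph h).2.1
    exact hpm.le.trans (hbounds x hx).1
  have hp_pos : ∀ x ∈ Ω, 0 < p x := fun x hx => by
    obtain ⟨pm, _, hpm, -, hbounds⟩ := hp.2.1
    exact one_pos.trans (hpm.trans_le (hbounds x hx).1)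
  refine ENNReal.ofReal_le_liminf_ofReal_of_forall_frequently_lt fun γ hγ hfreq => ?_
  refine luxNorm_le_of_pModular_div_le_one hγ ?_
  calc pModular Ω p (fun x => u x / γ)
      ≤ liminf (fun h => pModular Ω (ph h) (fun x => uh h x / γ)) atTop :=
        pModular_le_liminf (ae_restrict_of_forall_mem hΩ hp_pos)
          (fun h => ((hph h).1.mono subset_closure).aemeasurable hΩ)
          (fun h => ((huhmeas h).div_const γ).aemeasurable)
          (ae_restrict_of_forall_mem hΩ hconv)
          (hae.mono fun x hx => hx.div_const γ)
    _ ≤ 1 := liminf_le_of_frequently_le' (hfreq.mono fun h hh =>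
        pModular_div_le_one_of_luxNorm_lt hΩ (hph_one h) (huhmem h) hh)

/-- Lower semicontinuity of Luxemburg norms along varying exponents:
`‖u‖_{p(x)} ≤ liminf_h ‖u_h‖_{p_h(x)}` whenever `p_h → p` pointwise on `Ω` and
`u_h → u` a.e. in `Ω`. The `liminf` is taken in `ℝ≥0∞` to allow the value `∞`. -/
theorem luxNorm_lower_semicontinuous {N : ℕ} (hN : 2 ≤ N)
    (Ω : Set (EuclideanSpace ℝ (Fin N))) (hΩopen : IsOpen Ω)
    (hΩbdd : Bornology.IsBounded Ω)
    (p : EuclideanSpace ℝ (Fin N) → ℝ)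
    (ph : ℕ → EuclideanSpace ℝ (Fin N) → ℝ)
    (hp : InClassC Ω p) (hph : ∀ h, InClassC Ω (ph h))
    (hconv : ∀ x ∈ Ω, Tendsto (fun h => ph h x) atTop (𝓝 (p x)))
    (u : EuclideanSpace ℝ (Fin N) → ℝ)
    (humeas : Measurable u) (humem : pModular Ω p u < ⊤)
    (uh : ℕ → EuclideanSpace ℝ (Fin N) → ℝ)
    (huhmeas : ∀ h, Measurable (uh h))
    (huhmem : ∀ h, pModular Ω (ph h) (uh h) < ⊤)
    (hae : ∀ᵐ x ∂(volume.restrict Ω), Tendsto (fun h => uh h x) atTop (𝓝 (u x))) :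
    ENNReal.ofReal (luxNorm Ω p u) ≤
      liminf (fun h => ENNReal.ofReal (luxNorm Ω (ph h) (uh h))) atTop :=
  luxNorm_lower_semicontinuous_general Ω hΩopen p ph hp hph hconv u uh huhmeas huhmem hae
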